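/- For every integer n ≥ 2 and any real polynomial p of degree at most 2 with p((n-1)/2) ≥ 0, p(0) ≤ ε, p(n-1) ≤ ε, and p(n) ≥ 1-ε where 0 ≤ ε ≤ 1/2, one has ε ≥ 1/2 - n/(n^2+1). -/

import Mathlib

/-!
A polynomial of degree at most two is determined by its values at three points, so its values at
the four points `0`, `(n - 1) / 2`, `n - 1`, `n` satisfy one linear relation:
`4n p((n-1)/2) = (n+1) p(0) + n(n+1) p(n-1) - (n-1)² p(n)`.
Nonnegativity at the midpoint and the bounds at the other three points then give
`(n-1)² (1 - ε) ≤ (n+1)² ε`, i.e. `ε ≥ (n-1)² / (2(n² + 1)) = 1/2 - n/(n² + 1)`.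
-/

namespace Polynomial

variable {R : Type*} [CommRing R]

theorem eval_eq_of_natDegree_le_two {p : R[X]} (hp : p.natDegree ≤ 2) (x : R) :
    p.eval x = p.coeff 0 + p.coeff 1 * x + p.coeff 2 * x ^ 2 := by
  rw [eval_eq_sum_range' (n := 3) (by omega)]
  simp [Finset.sum_range_succ]

theorem four_mul_eval_midpoint_of_natDegree_le_two {p : R[X]} (hp : p.natDegree ≤ 2)
    {a m : R} (hm : 2 * m = a - 1) :
    4 * a * p.eval m =
      (a + 1) * p.eval 0 + a * (a + 1) * p.eval (a - 1) - (a - 1) ^ 2 * p.eval a := by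
  simp only [eval_eq_of_natDegree_le_two hp]
  linear_combination (2 * a * p.coeff 1 + a * p.coeff 2 * (2 * m + a - 1)) * hm

end Polynomial

theorem one_half_sub_div_sq_add_one (a : ℝ) :
    1 / 2 - a / (a ^ 2 + 1) = (a - 1) ^ 2 / (2 * (a ^ 2 + 1)) := by
  field_simp
  ring

theorem stmt_8_general (n : ℤ) (hn : 2 ≤ n) (ε : ℝ)
    (p : Polynomial ℝ) (hdeg : p.natDegree ≤ 2)
    (hmid : 0 ≤ p.eval (((n : ℝ) - 1)/2))
    (h0 : p.eval 0 ≤ ε) (h1 : p.eval ((n : ℝ) - 1) ≤ ε)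
    (h2 : p.eval (n : ℝ) ≥ 1 - ε) :
    ε ≥ 1/2 - (n : ℝ)/((n : ℝ)^2+1) := by
  have hn_nonneg : (0 : ℝ) ≤ n := by exact_mod_cast (by omega : (0 : ℤ) ≤ n)
  have relation := Polynomial.four_mul_eval_midpoint_of_natDegree_le_two hdeg
    (a := (n : ℝ)) (m := ((n : ℝ) - 1) / 2) (by ring)
  have key : ((n : ℝ) - 1) ^ 2 * (1 - ε) ≤ ((n : ℝ) + 1) ^ 2 * ε := by
    linarith [mul_nonneg (by positivity : (0 : ℝ) ≤ 4 * n) hmid,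
      mul_le_mul_of_nonneg_left h0 (by positivity : (0 : ℝ) ≤ n + 1),
      mul_le_mul_of_nonneg_left h1 (by positivity : (0 : ℝ) ≤ n * (n + 1)),
      mul_le_mul_of_nonneg_left h2 (sq_nonneg ((n : ℝ) - 1))]
  rw [ge_iff_le, one_half_sub_div_sq_add_one, div_le_iff₀ (by positivity)]
  linarith

theorem stmt_8 (n : ℤ) (hn : 2 ≤ n) (ε : ℝ) (hε0 : 0 ≤ ε) (hε1 : ε ≤ 1/2)
    (p : Polynomial ℝ) (hdeg : p.natDegree ≤ 2)
    (hmid : 0 ≤ p.eval (((n : ℝ) - 1)/2))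
    (h0 : p.eval 0 ≤ ε) (h1 : p.eval ((n : ℝ) - 1) ≤ ε)
    (h2 : p.eval (n : ℝ) ≥ 1 - ε) :
    ε ≥ 1/2 - (n : ℝ)/((n : ℝ)^2+1) :=
  stmt_8_general n hn ε p hdeg hmid h0 h1 h2
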